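/- arXiv:2008.00215 — 4 statements merged into one kernel-verified Lean document; each statement's English description precedes it below -/
import Mathlib

section
/- Let F be a field, let A be a γ×γ lower triangular Toeplitz matrix over F with first column (a_1, a_2, ..., a_γ), and let α be a nonzero element of F. If A is LT-superregular, then the lower triangular Toeplitz matrix with first column (a_1, α·a_2, α²·a_3, ..., α^{γ-1}·a_γ) is also LT-superregular. -/
/-- A matrix is LT-superregular if every square submatrix (given by strictly
increasing row and column indices) whose diagonal entries all lie in the lower
triangular part (row index ≥ column index) has nonzero determinant. -/
def LTSuperregular {n : ℕ} {R : Type*} [CommRing R] (A : Matrix (Fin n) (Fin n) R) : Prop :=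
  ∀ (k : ℕ) (r c : Fin k → Fin n), StrictMono r → StrictMono c →
    (∀ i, (c i : ℕ) ≤ (r i : ℕ)) → (A.submatrix r c).det ≠ 0

/-- The n×n lower triangular Toeplitz matrix whose first column is a 0, a 1, ... ;
its (i,j) entry is `a (i - j)` when i ≥ j and 0 otherwise. -/
def ltToeplitz (n : ℕ) {R : Type*} [CommRing R] (a : ℕ → R) : Matrix (Fin n) (Fin n) R :=
  Matrix.of fun i j => if (j : ℕ) ≤ (i : ℕ) then a ((i : ℕ) - (j : ℕ)) else 0

/-
Scaling the first column by `k ↦ α ^ k` is the diagonal similarity `D * A * D⁻¹` with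
`D = diagonal (i ↦ α ^ i)`, because `α ^ i * α⁻¹ ^ j = α ^ (i - j)` for `j ≤ i`. Every submatrix
of `D * A * D⁻¹` is again a diagonal rescaling of the corresponding submatrix of `A`, so its
determinant only changes by a unit factor.
-/

open Matrix

theorem Matrix.submatrix_diagonal_mul_mul_diagonal {m n k l R : Type*} [Semiring R]
    [Fintype m] [Fintype n] [Fintype k] [Fintype l]
    [DecidableEq m] [DecidableEq n] [DecidableEq k] [DecidableEq l]
    (d : m → R) (A : Matrix m n R) (e : n → R) (r : k → m) (c : l → n) :
    (diagonal d * A * diagonal e).submatrix r c =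
      diagonal (d ∘ r) * A.submatrix r c * diagonal (e ∘ c) := by
  ext i j
  simp [diagonal_mul, mul_diagonal]

theorem LTSuperregular.diagonal_mul_mul_diagonal {n : ℕ} {R : Type*} [CommRing R]
    {A : Matrix (Fin n) (Fin n) R} (hA : LTSuperregular A) {d e : Fin n → R}
    (hd : ∀ i, IsUnit (d i)) (he : ∀ j, IsUnit (e j)) :
    LTSuperregular (diagonal d * A * diagonal e) := by
  intro k r c hr hc hrc
  have hdr : IsUnit (∏ i, d (r i)) := IsUnit.prod_univ_iff.2 fun i => hd (r i)
  have hec : IsUnit (∏ j, e (c j)) := IsUnit.prod_univ_iff.2 fun j => he (c j)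
  rw [submatrix_diagonal_mul_mul_diagonal, det_mul, det_mul, det_diagonal, det_diagonal]
  exact hec.mul_left_eq_zero.not.2 (hdr.mul_right_eq_zero.not.2 (hA k r c hr hc hrc))

theorem ltToeplitz_pow_mul {F : Type*} [Field F] (n : ℕ) (a : ℕ → F) {α : F} (hα : α ≠ 0) :
    ltToeplitz n (fun k => α ^ k * a k) =
      diagonal (fun i : Fin n => α ^ (i : ℕ)) * ltToeplitz n a *
        diagonal (fun j : Fin n => α⁻¹ ^ (j : ℕ)) := by
  ext i j
  simp only [ltToeplitz, mul_diagonal, diagonal_mul, of_apply]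
  split_ifs with hji
  · rw [pow_sub₀ α hα hji, inv_pow]
    ring
  · simp

theorem stmt_1 {F : Type*} [Field F] (γ : ℕ) (a : ℕ → F) (α : F) (hα : α ≠ 0)
    (h : LTSuperregular (ltToeplitz γ a)) :
    LTSuperregular (ltToeplitz γ (fun k => α ^ k * a k)) := by
  rw [ltToeplitz_pow_mul γ a hα]
  exact h.diagonal_mul_mul_diagonal (fun i => (pow_ne_zero _ hα).isUnit)
    (fun j => (pow_ne_zero _ (inv_ne_zero hα)).isUnit)
end

section
/- Let p be a prime with p ≥ 5. The 4×4 lower triangular Toeplitz matrix over F_p with first column (1, 1, a_3, a_4) is LT-superregular if and only if a_3 ∉ {0,1}, and a_4 ∉ {0, a_3, a_3², 2a_3 − 1}. -/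
/-!
A square submatrix of the 4 × 4 matrix whose diagonal lies in the lower triangle is either the
whole matrix, which is unit lower triangular, or one of finitely many submatrices of size at
most 3. Expanding their determinants shows that each is, up to sign, `1` or one of `a₃`,
`1 - a₃`, `a₄`, `a₃ - a₄`, `a₃² - a₄`, `1 - 2a₃ + a₄`, and each of these six occurs.
-/

variable {R : Type*} [CommRing R]

@[simp]
lemma ltToeplitz_apply (n : ℕ) (a : ℕ → R) (i j : Fin n) :
    ltToeplitz n a i j = if (j : ℕ) ≤ i then a (i - j) else 0 :=
  rfl

lemma det_ltToeplitz (n : ℕ) (a : ℕ → R) : (ltToeplitz n a).det = a 0 ^ n := by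
  rw [Matrix.det_of_isLowerTriangular (ltToeplitz n a) fun i j (hij : i < j) =>
    if_neg (not_le.mpr hij)]
  simp

lemma det_submatrix_ltToeplitz_of_strictMono {n : ℕ} (a : ℕ → R) {r c : Fin n → Fin n}
    (hr : StrictMono r) (hc : StrictMono c) :
    ((ltToeplitz n a).submatrix r c).det = a 0 ^ n := by
  rw [hr.eq_id, hc.eq_id, Matrix.submatrix_id_id, det_ltToeplitz]

def SuperregularParams (a₃ a₄ : R) : Prop :=
  a₃ ≠ 0 ∧ a₃ ≠ 1 ∧ a₄ ≠ 0 ∧ a₄ ≠ a₃ ∧ a₄ ≠ a₃ ^ 2 ∧ a₄ ≠ 2 * a₃ - 1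

namespace SuperregularParams

variable {a : ℕ → R}

lemma of_ltSuperregular (ha₀ : a 0 = 1) (ha₁ : a 1 = 1)
    (H : LTSuperregular (ltToeplitz 4 a)) : SuperregularParams (a 2) (a 3) := by
  -- Without `Matrix.submatrix_cons_row`, `simp` expands each determinant before the submatrix.
  have m₂₀ : a 2 ≠ 0 := by
    simpa [-Matrix.submatrix_cons_row] using H 1 ![2] ![0] (by decide) (by decide) (by decide)
  have m₃₀ : a 3 ≠ 0 := by
    simpa [-Matrix.submatrix_cons_row] using H 1 ![3] ![0] (by decide) (by decide) (by decide)
  have m₁₂ : 1 - a 2 ≠ 0 := by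
    simpa [Matrix.det_fin_two, -Matrix.submatrix_cons_row, ha₀, ha₁] using
      H 2 ![1, 2] ![0, 1] (by decide) (by decide) (by decide)
  have m₁₃ : a 2 - a 3 ≠ 0 := by
    simpa [Matrix.det_fin_two, -Matrix.submatrix_cons_row, ha₀, ha₁] using
      H 2 ![1, 3] ![0, 1] (by decide) (by decide) (by decide)
  have m₂₃ : a 2 * a 2 - a 3 ≠ 0 := by
    simpa [Matrix.det_fin_two, -Matrix.submatrix_cons_row, ha₁] using
      H 2 ![2, 3] ![0, 1] (by decide) (by decide) (by decide)
  have m₁₂₃ : 1 - a 2 - a 2 + a 3 ≠ 0 := by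
    simpa [Matrix.det_fin_three, -Matrix.submatrix_cons_row, ha₀, ha₁] using
      H 3 ![1, 2, 3] ![0, 1, 2] (by decide) (by decide) (by decide)
  exact ⟨m₂₀, fun h => m₁₂ (by rw [h]; ring), m₃₀, fun h => m₁₃ (by rw [h]; ring),
    fun h => m₂₃ (by rw [h]; ring), fun h => m₁₂₃ (by rw [h]; ring)⟩

variable [Nontrivial R]

lemma det_submatrix_fin_one_ne_zero (ha₀ : a 0 = 1) (ha₁ : a 1 = 1)
    (h : SuperregularParams (a 2) (a 3)) (r c : Fin 1 → Fin 4)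
    (hcr : ∀ i, (c i : ℕ) ≤ r i) :
    ((ltToeplitz 4 a).submatrix r c).det ≠ 0 := by
  rw [Matrix.det_fin_one, Matrix.submatrix_apply, ltToeplitz_apply, if_pos (hcr 0)]
  have : (r 0 : ℕ) - c 0 < 4 := by omega
  generalize (r 0 : ℕ) - c 0 = m at *
  interval_cases m <;> simp [ha₀, ha₁, h.1, h.2.2.1]

lemma det_submatrix_fin_two_ne_zero (ha₀ : a 0 = 1) (ha₁ : a 1 = 1)
    (h : SuperregularParams (a 2) (a 3)) (r c : Fin 2 → Fin 4) (hr : StrictMono r)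
    (hc : StrictMono c) (hcr : ∀ i, (c i : ℕ) ≤ r i) :
    ((ltToeplitz 4 a).submatrix r c).det ≠ 0 := by
  have hr₀ : (r 0 : ℕ) < r 1 := hr (by decide : (0 : Fin 2) < 1)
  have hc₀ : (c 0 : ℕ) < c 1 := hc (by decide : (0 : Fin 2) < 1)
  have hcr₀ := hcr 0
  have hcr₁ := hcr 1
  have hr₁ := (r 1).isLt
  rw [Matrix.det_fin_two]
  simp only [Matrix.submatrix_apply, ltToeplitz_apply]
  generalize (r 0 : ℕ) = x₀, (r 1 : ℕ) = x₁, (c 0 : ℕ) = y₀, (c 1 : ℕ) = y₁ at *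
  unfold SuperregularParams at h
  interval_cases x₁ <;> interval_cases x₀ <;> interval_cases y₁ <;> interval_cases y₀ <;>
    simp only [Nat.reduceLeDiff, ↓reduceIte, Nat.reduceSub, ha₀, ha₁] <;> grind [one_ne_zero]

lemma det_submatrix_fin_three_ne_zero (ha₀ : a 0 = 1) (ha₁ : a 1 = 1)
    (h : SuperregularParams (a 2) (a 3)) (r c : Fin 3 → Fin 4) (hr : StrictMono r)
    (hc : StrictMono c) (hcr : ∀ i, (c i : ℕ) ≤ r i) :
    ((ltToeplitz 4 a).submatrix r c).det ≠ 0 := by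
  have hr₀ : (r 0 : ℕ) < r 1 := hr (by decide : (0 : Fin 3) < 1)
  have hr₁ : (r 1 : ℕ) < r 2 := hr (by decide : (1 : Fin 3) < 2)
  have hc₀ : (c 0 : ℕ) < c 1 := hc (by decide : (0 : Fin 3) < 1)
  have hc₁ : (c 1 : ℕ) < c 2 := hc (by decide : (1 : Fin 3) < 2)
  have hcr₀ := hcr 0
  have hcr₁ := hcr 1
  have hcr₂ := hcr 2
  have hr₂ := (r 2).isLt
  rw [Matrix.det_fin_three]
  simp only [Matrix.submatrix_apply, ltToeplitz_apply]
  generalize (r 0 : ℕ) = x₀, (r 1 : ℕ) = x₁, (r 2 : ℕ) = x₂,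
    (c 0 : ℕ) = y₀, (c 1 : ℕ) = y₁, (c 2 : ℕ) = y₂ at *
  unfold SuperregularParams at h
  interval_cases x₂ <;> interval_cases x₁ <;> interval_cases x₀ <;>
    interval_cases y₂ <;> interval_cases y₁ <;> interval_cases y₀ <;>
    simp only [Nat.reduceLeDiff, ↓reduceIte, Nat.reduceSub, ha₀, ha₁] <;> grind [one_ne_zero]

end SuperregularParams

theorem ltSuperregular_ltToeplitz_four_iff {a : ℕ → R} (ha₀ : a 0 = 1) (ha₁ : a 1 = 1) :
    LTSuperregular (ltToeplitz 4 a) ↔ SuperregularParams (a 2) (a 3) := by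
  refine ⟨SuperregularParams.of_ltSuperregular ha₀ ha₁, fun h k r c hr hc hcr => ?_⟩
  have : Nontrivial R := nontrivial_of_ne _ _ h.1
  have hk : k ≤ 4 := Fin.le_of_injective r hr.injective
  interval_cases k
  · simp
  · exact h.det_submatrix_fin_one_ne_zero ha₀ ha₁ r c hcr
  · exact h.det_submatrix_fin_two_ne_zero ha₀ ha₁ r c hr hc hcr
  · exact h.det_submatrix_fin_three_ne_zero ha₀ ha₁ r c hr hc hcr
  · simp [det_submatrix_ltToeplitz_of_strictMono a hr hc, ha₀]

theorem stmt_5_general (p : ℕ) (a3 a4 : ZMod p) :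
    LTSuperregular (ltToeplitz 4 (fun k => [1, 1, a3, a4].getD k 0)) ↔
      (a3 ∉ ({0, 1} : Set (ZMod p)) ∧
       a4 ∉ ({0, a3, a3 ^ 2, 2 * a3 - 1} : Set (ZMod p))) := by
  rw [ltSuperregular_ltToeplitz_four_iff rfl rfl]
  simp only [SuperregularParams, Set.mem_insert_iff, Set.mem_singleton_iff, not_or, ne_eq,
    and_assoc]
  exact Iff.rfl

theorem stmt_5 (p : ℕ) (hp : p.Prime) (h5 : 5 ≤ p) (a3 a4 : ZMod p) :
    LTSuperregular (ltToeplitz 4 (fun k => [1, 1, a3, a4].getD k 0)) ↔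
      (a3 ∉ ({0, 1} : Set (ZMod p)) ∧
       a4 ∉ ({0, a3, a3 ^ 2, 2 * a3 - 1} : Set (ZMod p))) :=
  stmt_5_general p a3 a4
end

section
/- Let p be a prime with p ≥ 11. The 5×5 lower triangular Toeplitz matrix over F_p with first column (1, 1, 1/2, 1, −1/2) is LT-superregular. -/
/-! Doubling the first column clears the denominators: the matrix is `2⁻¹ • B` reduced modulo `p`,
where `B` is the integer lower triangular Toeplitz matrix with first column `(2, 2, 1, 2, -1)`.
A finite computation shows that every LT-minor of `B` divides `(7!)²`, so it stays nonzero modulo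
every prime `p > 7`. -/

open scoped Nat

section LaplaceDet

variable {R : Type*} [CommRing R]

/-- Unlike `Matrix.det`, this cofactor expansion evaluates quickly under `decide`. -/
def laplaceDet : (n : ℕ) → Matrix (Fin n) (Fin n) R → R
  | 0, _ => 1
  | n + 1, M =>
    ∑ j : Fin (n + 1), (-1) ^ (j : ℕ) * M 0 j * laplaceDet n (M.submatrix Fin.succ j.succAbove)

theorem laplaceDet_eq_det : ∀ (n : ℕ) (M : Matrix (Fin n) (Fin n) R), laplaceDet n M = M.det
  | 0, M => by simp [laplaceDet]
  | n + 1, M => by simp [laplaceDet, laplaceDet_eq_det n, Matrix.det_succ_row_zero]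

end LaplaceDet

/-- The tuples are built as nested closures rather than stored in a list, which keeps `decide`
fast. -/
def allStrictMono (n : ℕ) : (k : ℕ) → ((Fin k → Fin n) → Bool) → Bool
  | 0, P => P Fin.elim0
  | k + 1, P => allStrictMono n k fun r =>
      (List.finRange n).all fun a => if ∀ i, a < r i then P (Fin.cons a r) else true

theorem apply_eq_true_of_allStrictMono {n : ℕ} :
    ∀ {k : ℕ} {P : (Fin k → Fin n) → Bool}, allStrictMono n k P = true →
      ∀ {r : Fin k → Fin n}, StrictMono r → P r = true
  | 0, P, h, r, _ => by rwa [Subsingleton.elim r Fin.elim0]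
  | k + 1, P, h, r, hr => by
    rw [allStrictMono] at h
    have htail := apply_eq_true_of_allStrictMono h (r := Fin.tail r)
      (hr.comp Fin.strictMono_succ)
    have hhead : ∀ i, r 0 < Fin.tail r i := fun i => hr (Fin.succ_pos i)
    simpa [hhead] using List.all_eq_true.1 htail (r 0) (List.mem_finRange _)

section LTSuperregular

variable {R S : Type*} [CommRing R] [CommRing S]

theorem ltToeplitz_map (f : R →+* S) (n : ℕ) (a : ℕ → R) :
    (ltToeplitz n a).map f = ltToeplitz n (f ∘ a) := by
  ext i j
  simp only [ltToeplitz, Matrix.map_apply, Matrix.of_apply, Function.comp_apply]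
  split_ifs <;> simp

theorem ltToeplitz_smul (n : ℕ) (c : R) (a : ℕ → R) :
    ltToeplitz n (c • a) = c • ltToeplitz n a := by
  ext i j
  simp only [ltToeplitz, Matrix.smul_apply, Matrix.of_apply, Pi.smul_apply]
  split_ifs <;> simp

theorem LTSuperregular.smul [NoZeroDivisors R] {n : ℕ} {A : Matrix (Fin n) (Fin n) R}
    (hA : LTSuperregular A) {c : R} (hc : c ≠ 0) : LTSuperregular (c • A) := by
  intro k r c' hr hc' hrc
  rw [show (c • A).submatrix r c' = c • A.submatrix r c' from rfl, Matrix.det_smul]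
  exact mul_ne_zero (pow_ne_zero _ hc) (hA k r c' hr hc' hrc)

theorem ltSuperregular_map_of_map_det_ne_zero (f : R →+* S) {n : ℕ}
    (A : Matrix (Fin n) (Fin n) R)
    (h : ∀ (k : ℕ) (r c : Fin k → Fin n), StrictMono r → StrictMono c →
      (∀ i, (c i : ℕ) ≤ (r i : ℕ)) → f (A.submatrix r c).det ≠ 0) :
    LTSuperregular (A.map f) := by
  intro k r c hr hc hrc
  rw [Matrix.submatrix_map, ← RingHom.mapMatrix_apply, ← RingHom.map_det]
  exact h k r c hr hc hrc

end LTSuperregular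

theorem intCast_zmod_ne_zero_of_dvd_factorial_pow {p n m : ℕ} [hp : Fact p.Prime] (hnp : n < p)
    {d : ℤ} (hd : d ∣ (n ! : ℤ) ^ m) : (d : ZMod p) ≠ 0 := by
  rw [Ne, ZMod.intCast_zmod_eq_zero_iff_dvd]
  intro hpd
  have hp_dvd : p ∣ n ! ^ m := by exact_mod_cast hpd.trans hd
  have := (Nat.Prime.dvd_factorial hp.out).1 (hp.out.dvd_of_dvd_pow hp_dvd)
  omega

theorem ltToeplitz_two_two_one_two_neg_one_minor_dvd {k : ℕ} {r c : Fin k → Fin 5}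
    (hr : StrictMono r) (hc : StrictMono c) (hrc : ∀ i, (c i : ℕ) ≤ (r i : ℕ)) :
    ((ltToeplitz 5 fun k => [2, 2, 1, 2, -1].getD k (0 : ℤ)).submatrix r c).det ∣
      (7 ! : ℤ) ^ 2 := by
  have hk : k < 6 := by simpa [Nat.lt_succ_iff] using Fintype.card_le_of_injective r hr.injective
  have hcheck : ∀ k < 6, (allStrictMono 5 k fun r => allStrictMono 5 k fun c =>
      if ∀ i, (c i : ℕ) ≤ (r i : ℕ) then
        decide (laplaceDet k ((ltToeplitz 5 fun k => [2, 2, 1, 2, -1].getD k (0 : ℤ)).submatrix r c)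
          ∣ (7 ! : ℤ) ^ 2)
      else true) = true := by
    decide
  have := apply_eq_true_of_allStrictMono (apply_eq_true_of_allStrictMono (hcheck k hk) hr) hc
  simpa [hrc, laplaceDet_eq_det] using this

theorem stmt_9 (p : ℕ) (hp : p.Prime) (h11 : 11 ≤ p) :
    LTSuperregular (ltToeplitz 5 (fun k => [1, 1, 2⁻¹, 1, -2⁻¹].getD k (0 : ZMod p))) := by
  have := Fact.mk hp
  have h2 : (2 : ZMod p) ≠ 0 := by
    simpa using intCast_zmod_ne_zero_of_dvd_factorial_pow (p := p) (by omega)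
      (by decide : (2 : ℤ) ∣ (7 ! : ℤ) ^ 2)
  have hcol : (fun k => [1, 1, 2⁻¹, 1, -2⁻¹].getD k (0 : ZMod p)) =
      (2 : ZMod p)⁻¹ • (Int.castRingHom (ZMod p) ∘ fun k => [2, 2, 1, 2, -1].getD k 0) := by
    funext k
    rcases k with _ | _ | _ | _ | _ | k <;> simp [h2]
  rw [hcol, ltToeplitz_smul, ← ltToeplitz_map]
  refine LTSuperregular.smul (ltSuperregular_map_of_map_det_ne_zero _ _ ?_) (inv_ne_zero h2)
  intro k r c hr hc hrc
  exact intCast_zmod_ne_zero_of_dvd_factorial_pow (by omega)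
    (ltToeplitz_two_two_one_two_neg_one_minor_dvd hr hc hrc)
end

section
/- Over F_17, the 7×7 lower triangular Toeplitz matrix with first column (1, 1, 9, 3, 5, 1, 3) is LT-superregular. -/
namespace Matrix

variable {R : Type*} [CommRing R] [DecidableEq R]

/-- The zero test is only there to make evaluation cheap: minors of the many vanishing entries
of a lower triangular matrix are never computed. -/
def laplaceDet : (n : ℕ) → Matrix (Fin n) (Fin n) R → R
  | 0, _ => 1
  | n + 1, A => ∑ j : Fin (n + 1), if A 0 j = 0 then 0 else
      (-1) ^ (j : ℕ) * A 0 j * laplaceDet n (A.submatrix Fin.succ j.succAbove)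

theorem det_eq_laplaceDet : ∀ {n : ℕ} (A : Matrix (Fin n) (Fin n) R), A.det = laplaceDet n A
  | 0, A => A.det_fin_zero
  | n + 1, A => by
    rw [det_succ_row_zero, laplaceDet]
    refine Finset.sum_congr rfl fun j _ => ?_
    split_ifs with h
    · simp [h]
    · rw [det_eq_laplaceDet]

end Matrix

theorem List.ofFn_sublist_finRange {k n : ℕ} {f : Fin k → Fin n} (hf : StrictMono f) :
    (List.ofFn f).Sublist (List.finRange n) :=
  List.sublist_of_subperm_of_pairwise (r := (· ≤ ·))
    ((List.nodup_ofFn.mpr hf.injective).subperm fun x _ => List.mem_finRange x)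
    (List.pairwise_ofFn.mpr fun _ _ hij => (hf hij).le)
    ((List.pairwise_lt_finRange n).imp le_of_lt)

theorem ltSuperregular_of_forall_sublists {n : ℕ} {R : Type*} [CommRing R]
    (A : Matrix (Fin n) (Fin n) R)
    (h : ∀ rl ∈ (List.finRange n).sublists, ∀ cl ∈ (List.finRange n).sublists,
      ∀ hl : cl.length = rl.length, (∀ i : Fin rl.length, cl[(i : ℕ)] ≤ rl[i]) →
        (Matrix.of fun i j : Fin rl.length => A rl[i] cl[(j : ℕ)]).det ≠ 0) :
    LTSuperregular A := by
  intro k r c hr hc hrc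
  have hminor := h (List.ofFn r) (List.mem_sublists.mpr (List.ofFn_sublist_finRange hr))
    (List.ofFn c) (List.mem_sublists.mpr (List.ofFn_sublist_finRange hc)) (by simp)
    (fun i => by simpa using hrc ⟨i, by simpa using i.isLt⟩)
  rw [← Matrix.det_submatrix_equiv_self (finCongr (List.length_ofFn (f := r)).symm)] at hminor
  convert hminor using 2
  ext i j
  simp

theorem stmt_14 :
    LTSuperregular (ltToeplitz 7 (fun k => [1, 1, 9, 3, 5, 1, 3].getD k (0 : ZMod 17))) := by
  apply ltSuperregular_of_forall_sublists
  simp only [Matrix.det_eq_laplaceDet]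
  decide +kernel
end
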